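/- arXiv:math/0401388 — 7 statements merged into one kernel-verified Lean document; each statement's English description precedes it below -/
import Mathlib

section
/- Let Z_1, Z_2 be i.i.d. random variables with E[Z] = 0, let U be uniform on [0,1] independent of (Z_1, Z_2), and suppose D = U·Z_1 + (1−U)·Z_2 has the same distribution as Z_1, with E[Z_1^2] < ∞. Then Z_1 = 0 almost surely. -/
/-!
Squaring the fixed-point equation, the cross term `2 E[U(1-U) Z₁ Z₂]` vanishes because `Z₁` is
centred and independent of `(U, Z₂)`, while the diagonal terms factor by independence, so
`E[Z₁²] = E[D²] = (E[U²] + E[(1-U)²]) E[Z₁²] = (2/3) E[Z₁²]`. Hence `E[Z₁²] = 0`.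
-/

open MeasureTheory ProbabilityTheory Set

section UniformWeight

variable {Ω : Type*} [MeasurableSpace Ω] {P : Measure Ω} {U : Ω → ℝ}

lemma aemeasurable_of_map_eq_uniform (hU : P.map U = volume.restrict (Icc 0 1)) :
    AEMeasurable U P :=
  .of_map_ne_zero <| by simp [hU, Measure.restrict_eq_zero, Real.volume_Icc]

lemma ae_mem_Icc_of_map_eq_uniform (hU : P.map U = volume.restrict (Icc 0 1)) :
    ∀ᵐ ω ∂P, U ω ∈ Icc (0 : ℝ) 1 :=
  (ae_map_iff (aemeasurable_of_map_eq_uniform hU) measurableSet_Icc).1 <| by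
    rw [hU]; exact ae_restrict_mem measurableSet_Icc

lemma integral_comp_of_map_eq_uniform (hU : P.map U = volume.restrict (Icc 0 1))
    {g : ℝ → ℝ} (hg : Continuous g) :
    ∫ ω, g (U ω) ∂P = ∫ x in (0 : ℝ)..1, g x := by
  rw [← integral_map (aemeasurable_of_map_eq_uniform hU) hg.aestronglyMeasurable, hU,
    integral_Icc_eq_integral_Ioc, intervalIntegral.integral_of_le zero_le_one]

lemma integral_sq_of_map_eq_uniform (hU : P.map U = volume.restrict (Icc 0 1)) :
    ∫ ω, U ω ^ 2 ∂P = 1 / 3 := by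
  rw [integral_comp_of_map_eq_uniform hU (continuous_pow 2), integral_pow]
  norm_num

lemma integral_one_sub_sq_of_map_eq_uniform (hU : P.map U = volume.restrict (Icc 0 1)) :
    ∫ ω, (1 - U ω) ^ 2 ∂P = 1 / 3 := by
  rw [integral_comp_of_map_eq_uniform hU (g := fun x => (1 - x) ^ 2) (by fun_prop),
    intervalIntegral.integral_comp_sub_left (fun x => x ^ 2), integral_pow]
  norm_num

end UniformWeight

section SecondMoment

variable {Ω : Type*} [MeasurableSpace Ω] {P : Measure Ω}

lemma integral_add_sq_of_memLp {A B : Ω → ℝ} (hA : MemLp A 2 P) (hB : MemLp B 2 P) :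
    ∫ ω, (A ω + B ω) ^ 2 ∂P
      = ∫ ω, A ω ^ 2 ∂P + ∫ ω, B ω ^ 2 ∂P + 2 * ∫ ω, A ω * B ω ∂P := by
  have hsq : Integrable (fun ω => A ω ^ 2 + B ω ^ 2) P := hA.integrable_sq.add hB.integrable_sq
  have hAB : Integrable (fun ω => 2 * (A ω * B ω)) P := (hA.integrable_mul hB).const_mul 2
  simp_rw [add_sq', mul_assoc]
  rw [integral_add hsq hAB,
    integral_add hA.integrable_sq hB.integrable_sq, integral_const_mul]

lemma ae_eq_zero_of_integral_sq_eq_zero {X : Ω → ℝ} (hX : MemLp X 2 P)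
    (h : ∫ ω, X ω ^ 2 ∂P = 0) : X =ᵐ[P] 0 := by
  filter_upwards [(integral_eq_zero_iff_of_nonneg (fun ω => sq_nonneg (X ω))
    hX.integrable_sq).1 h] with ω hω
  exact pow_eq_zero_iff two_ne_zero |>.1 hω

lemma ProbabilityTheory.IndepFun.integral_mul_sq {A B : Ω → ℝ} (h : IndepFun A B P)
    (hA : AEMeasurable A P) (hB : AEMeasurable B P) :
    ∫ ω, (A ω * B ω) ^ 2 ∂P = (∫ ω, A ω ^ 2 ∂P) * ∫ ω, B ω ^ 2 ∂P := by
  simp_rw [mul_pow]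
  have hsq : IndepFun (fun ω => A ω ^ 2) (fun ω => B ω ^ 2) P :=
    h.comp (measurable_id.pow_const 2) (measurable_id.pow_const 2)
  exact hsq.integral_fun_mul_eq_mul_integral (hA.pow_const 2).aestronglyMeasurable
    (hB.pow_const 2).aestronglyMeasurable

variable {W X Y : Ω → ℝ}

lemma MeasureTheory.MemLp.mul_of_ae_mem_Icc {p : ENNReal} (hX : MemLp X p P)
    (hW : AEMeasurable W P)
    (hW01 : ∀ᵐ ω ∂P, W ω ∈ Icc (0 : ℝ) 1) : MemLp (fun ω => W ω * X ω) p P := by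
  refine hX.mono (hW.aestronglyMeasurable.mul hX.1) ?_
  filter_upwards [hW01] with ω hω
  rw [norm_mul]
  exact mul_le_of_le_one_left (norm_nonneg _) (by rw [Real.norm_of_nonneg hω.1]; exact hω.2)

lemma integral_sq_convex_comb_of_iIndepFun
    (hind : iIndepFun ![W, X, Y] P) (hW : AEMeasurable W P)
    (hW01 : ∀ᵐ ω ∂P, W ω ∈ Icc (0 : ℝ) 1) (hX : MemLp X 2 P) (hY : MemLp Y 2 P)
    (hX0 : ∫ ω, X ω ∂P = 0) :
    ∫ ω, (W ω * X ω + (1 - W ω) * Y ω) ^ 2 ∂P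
      = (∫ ω, W ω ^ 2 ∂P) * ∫ ω, X ω ^ 2 ∂P
        + (∫ ω, (1 - W ω) ^ 2 ∂P) * ∫ ω, Y ω ^ 2 ∂P := by
  have hmeas : ∀ i, AEMeasurable (![W, X, Y] i) P := by
    intro i
    fin_cases i
    exacts [hW, hX.aestronglyMeasurable.aemeasurable, hY.aestronglyMeasurable.aemeasurable]
  have hV : AEMeasurable (fun ω => 1 - W ω) P := aemeasurable_const.sub hW
  have hV01 : ∀ᵐ ω ∂P, 1 - W ω ∈ Icc (0 : ℝ) 1 := by
    filter_upwards [hW01] with ω ⟨h0, h1⟩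
    constructor <;> linarith
  have hWX : IndepFun W X P := hind.indepFun (show (0 : Fin 3) ≠ 1 by decide)
  have hVY : IndepFun (fun ω => 1 - W ω) Y P :=
    (hind.indepFun (show (0 : Fin 3) ≠ 2 by decide)).comp
      (measurable_const.sub measurable_id) measurable_id
  -- `(W, Y)` is independent of `X`, so the cross term factors through `E[X] = 0`
  have hWY_X : IndepFun (fun ω => W ω * (1 - W ω) * Y ω) X P :=
    (hind.indepFun_prodMk₀ hmeas 0 2 1 (by decide) (by decide)).comp
      (φ := fun p : ℝ × ℝ => p.1 * (1 - p.1) * p.2) (ψ := id) (by fun_prop) measurable_id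
  have hcross : ∫ ω, W ω * X ω * ((1 - W ω) * Y ω) ∂P = 0 :=
    calc _ = ∫ ω, W ω * (1 - W ω) * Y ω * X ω ∂P := by congr 1 with ω; ring
      _ = (∫ ω, W ω * (1 - W ω) * Y ω ∂P) * ∫ ω, X ω ∂P :=
        hWY_X.integral_fun_mul_eq_mul_integral
          ((hW.mul hV).mul hY.aestronglyMeasurable.aemeasurable).aestronglyMeasurable
          hX.aestronglyMeasurable
      _ = 0 := by rw [hX0, mul_zero]
  rw [integral_add_sq_of_memLp (hX.mul_of_ae_mem_Icc hW hW01) (hY.mul_of_ae_mem_Icc hV hV01),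
    hcross, hWX.integral_mul_sq hW hX.aestronglyMeasurable.aemeasurable,
    hVY.integral_mul_sq hV hY.aestronglyMeasurable.aemeasurable]
  ring

end SecondMoment

theorem quicksort_moment_endogeny_general
    {Ω : Type*} [MeasurableSpace Ω] (P : Measure Ω)
    (U Z₁ Z₂ : Ω → ℝ)
    (hindep : iIndepFun ![U, Z₁, Z₂] P)
    (hU : Measure.map U P = volume.restrict (Set.Icc (0:ℝ) 1))
    (hident : IdentDistrib Z₁ Z₂ P P)
    (hmean : ∫ ω, Z₁ ω ∂P = 0)
    (hL2 : MemLp Z₁ 2 P)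
    (hD : IdentDistrib (fun ω => U ω * Z₁ ω + (1 - U ω) * Z₂ ω) Z₁ P P) :
    ∀ᵐ ω ∂P, Z₁ ω = 0 := by
  have hsq : ∀ {X : Ω → ℝ}, IdentDistrib X Z₁ P P → ∫ ω, X ω ^ 2 ∂P = ∫ ω, Z₁ ω ^ 2 ∂P :=
    fun h => (h.comp (measurable_id.pow_const 2)).integral_eq
  have hcontract : ∫ ω, Z₁ ω ^ 2 ∂P = 2 / 3 * ∫ ω, Z₁ ω ^ 2 ∂P :=
    calc ∫ ω, Z₁ ω ^ 2 ∂P = ∫ ω, (U ω * Z₁ ω + (1 - U ω) * Z₂ ω) ^ 2 ∂P := (hsq hD).symm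
      _ = (∫ ω, U ω ^ 2 ∂P) * ∫ ω, Z₁ ω ^ 2 ∂P
          + (∫ ω, (1 - U ω) ^ 2 ∂P) * ∫ ω, Z₂ ω ^ 2 ∂P :=
        integral_sq_convex_comb_of_iIndepFun hindep (aemeasurable_of_map_eq_uniform hU)
          (ae_mem_Icc_of_map_eq_uniform hU) hL2 (hident.memLp_snd hL2) hmean
      _ = 2 / 3 * ∫ ω, Z₁ ω ^ 2 ∂P := by
        rw [integral_sq_of_map_eq_uniform hU, integral_one_sub_sq_of_map_eq_uniform hU,
          hsq hident.symm]
        ring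
  exact ae_eq_zero_of_integral_sq_eq_zero hL2 (by linarith)

/-- Let `Z₁, Z₂` be i.i.d. with mean `0` and finite second moment,
let `U` be uniform on `[0,1]` independent of `(Z₁, Z₂)`, and suppose
`D = U·Z₁ + (1-U)·Z₂` has the same distribution as `Z₁`. Then `Z₁ = 0` a.s. -/
theorem quicksort_moment_endogeny
    {Ω : Type*} [MeasurableSpace Ω] (P : Measure Ω) [IsProbabilityMeasure P]
    (U Z₁ Z₂ : Ω → ℝ)
    (hindep : iIndepFun ![U, Z₁, Z₂] P)
    (hU : Measure.map U P = volume.restrict (Set.Icc (0:ℝ) 1))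
    (hident : IdentDistrib Z₁ Z₂ P P)
    (hmean : ∫ ω, Z₁ ω ∂P = 0)
    (hL2 : MemLp Z₁ 2 P)
    (hD : IdentDistrib (fun ω => U ω * Z₁ ω + (1 - U ω) * Z₂ ω) Z₁ P P) :
    ∀ᵐ ω ∂P, Z₁ ω = 0 :=
  quicksort_moment_endogeny_general P U Z₁ Z₂ hindep hU hident hmean hL2 hD
end

section
/- Let μ be the probability measure on [1/2,1] ∪ {∞} with density 1/(2y²) on [1/2,1] and atom 1/2 at ∞, so μ((y,∞]) = 1/(2y) for y ∈ [1/2,1]. Let Y_1, Y_2, Y_3, Y_4 be i.i.d. with law μ and U uniform on [0,1], all independent. Define Z = min(Y_1,Y_2,Y_3,Y_4) if U < min(Y_1,Y_2,Y_3,Y_4), and Z = ∞ otherwise. Then Z has density 1/(4x⁴) on [1/2, 1]. -/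
open MeasureTheory ProbabilityTheory
open scoped ENNReal

/-- The frozen-percolation solution measure `μ` on `[1/2,1] ∪ {∞} ⊆ ℝ≥0∞`:
density `1/(2y²)` on `[1/2,1]` and an atom of mass `1/2` at `∞`. -/
noncomputable def frozenNu : Measure ℝ≥0∞ :=
  Measure.map ENNReal.ofReal
      ((volume.restrict (Set.Icc (1/2 : ℝ) 1)).withDensity fun y =>
        ENNReal.ofReal (1 / (2 * y ^ 2)))
    + ((1/2 : ℝ≥0∞)) • Measure.dirac ∞

/-!
Condition on `U = u` first. Writing `M` for the minimum of the `Yᵢ`, independence gives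
`P(M > y) = μ((y,∞])⁴ = 1/(16 y⁴)` on `[1/2, 1]`, and `M` has no atom at `a`, so
`P(u < M, a ≤ M ≤ b) = 1/(16 max(u,a)⁴) - 1/(16 max(u,b)⁴)`. Integrating over `u ∈ [0,1]`
gives `1/(12 a³) - 1/(12 b³) = ∫ₐᵇ 1/(4x⁴) dx`.
-/

open Set

section MinOfProduct

variable {ι α : Type*} [Fintype ι] [Nonempty ι] [CompleteLinearOrder α]

lemma setOf_lt_iInf_eq_pi (c : α) : {y : ι → α | c < ⨅ i, y i} = univ.pi fun _ => Ioi c := by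
  ext y
  refine ⟨fun h i _ => h.trans_le (iInf_le _ i), fun h => ?_⟩
  obtain ⟨i, hi⟩ := exists_eq_ciInf_of_finite (f := y)
  show c < ⨅ i, y i
  rw [← hi]
  exact h i (mem_univ i)

variable [MeasurableSpace α] (μ : Measure α) [SigmaFinite μ]

lemma pi_lt_iInf (c : α) :
    Measure.pi (fun _ : ι => μ) {y | c < ⨅ i, y i} = μ (Ioi c) ^ Fintype.card ι := by
  rw [setOf_lt_iInf_eq_pi, Measure.pi_pi, Finset.prod_const, Finset.card_univ]

lemma pi_iInf_eq_null {c : α} (hc : μ {c} = 0) :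
    Measure.pi (fun _ : ι => μ) {y | ⨅ i, y i = c} = 0 := by
  refine measure_mono_null (fun y hy => ?_) <|
    measure_iUnion_null fun i => Measure.pi_eval_preimage_null _ (i := i) hc
  obtain ⟨i, hi⟩ := exists_eq_ciInf_of_finite (f := y)
  exact mem_iUnion.2 ⟨i, hi.trans hy⟩

end MinOfProduct

lemma measure_lt_and_mem_Icc {X α : Type*} [MeasurableSpace X] [LinearOrder α]
    [TopologicalSpace α] [OrderClosedTopology α] [MeasurableSpace α] [OpensMeasurableSpace α]
    (μ : Measure X) [IsFiniteMeasure μ] {f : X → α} (hf : Measurable f) {c d : α}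
    (hcd : c ≤ d)
    (hc : μ {x | f x = c} = 0) (e : α) :
    μ {x | e < f x ∧ f x ∈ Icc c d} = μ {x | max e c < f x} - μ {x | max e d < f x} := by
  have hsub : {x | max e d < f x} ⊆ {x | max e c < f x} := fun x hx =>
    (max_le_max_left e hcd).trans_lt hx
  rw [← measure_sdiff hsub (hf measurableSet_Ioi).nullMeasurableSet (measure_ne_top _ _)]
  refine le_antisymm ?_ (measure_mono fun x ⟨hxc, hxd⟩ => ?_)
  · calc μ {x | e < f x ∧ f x ∈ Icc c d}
        ≤ μ ({x | max e c < f x} \ {x | max e d < f x} ∪ {x | f x = c}) := by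
          refine measure_mono fun x ⟨hex, hcx, hxd⟩ => ?_
          rcases hcx.eq_or_lt with h | h
          · exact Or.inr h.symm
          · exact Or.inl ⟨max_lt hex h, (hxd.trans (le_max_right e d)).not_gt⟩
      _ ≤ _ := (measure_union_le _ _).trans (by rw [hc, add_zero])
  · simp only [mem_ofPred_eq, max_lt_iff] at hxc hxd
    exact ⟨hxc.1, hxc.2.le, not_lt.1 fun h => hxd ⟨hxc.1, h⟩⟩

lemma integral_one_div_mul_pow_succ {a b : ℝ} (ha : 0 < a) (hab : a ≤ b) (c : ℝ) {n : ℕ}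
    (hn : n ≠ 0) :
    ∫ x in a..b, 1 / (c * x ^ (n + 1)) = (1 / a ^ n - 1 / b ^ n) / (c * n) := by
  have h0 : (0 : ℝ) ∉ uIcc a b := by
    rw [uIcc_of_le hab]; exact fun h => ha.not_ge h.1
  have hpow : ∀ x ∈ uIcc a b, 1 / (c * x ^ (n + 1)) = c⁻¹ * x ^ (-(n + 1 : ℤ)) := by
    intro x _
    rw [zpow_neg, ← Nat.cast_succ, zpow_natCast, one_div, mul_inv]
  have hn' : (n : ℝ) ≠ 0 := Nat.cast_ne_zero.2 hn
  have ha' := ha.ne'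
  have hb' := (ha.trans_le hab).ne'
  rw [intervalIntegral.integral_congr hpow, intervalIntegral.integral_const_mul,
    integral_zpow (Or.inr ⟨by omega, h0⟩), show -((n : ℤ) + 1) + 1 = -n by ring, zpow_neg,
    zpow_neg, zpow_natCast, zpow_natCast]
  push_cast
  rw [show -((n : ℝ) + 1) + 1 = -n by ring]
  field_simp
  ring

lemma setLIntegral_Icc_ofReal {f : ℝ → ℝ} {a b : ℝ} (hab : a ≤ b)
    (hf : ContinuousOn f (Icc a b))
    (hf0 : ∀ x ∈ Icc a b, 0 ≤ f x) :
    ∫⁻ x in Icc a b, ENNReal.ofReal (f x) = ENNReal.ofReal (∫ x in a..b, f x) := by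
  rw [intervalIntegral.integral_of_le hab, ← integral_Icc_eq_integral_Ioc,
    ofReal_integral_eq_lintegral_ofReal hf.integrableOn_Icc
      ((ae_restrict_iff' measurableSet_Icc).2 (.of_forall hf0))]

lemma continuous_one_div_mul_max_pow {c : ℝ} (hc : 0 < c) :
    Continuous fun u : ℝ => 1 / (16 * max u c ^ 4) :=
  continuous_const.div (by fun_prop) fun u => by positivity

lemma integral_one_div_mul_max_pow {c : ℝ} (hc : 0 < c) (hc1 : c ≤ 1) :
    ∫ u in (0 : ℝ)..1, 1 / (16 * max u c ^ 4) = 1 / (12 * c ^ 3) - 1 / 48 := by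
  have hcont := continuous_one_div_mul_max_pow hc
  rw [← intervalIntegral.integral_add_adjacent_intervals (b := c)
    (hcont.intervalIntegrable _ _) (hcont.intervalIntegrable _ _)]
  have hlow : ∀ u ∈ uIcc 0 c, 1 / (16 * max u c ^ 4) = 1 / (16 * c ^ 4) := by
    intro u hu
    rw [uIcc_of_le hc.le] at hu
    rw [max_eq_right hu.2]
  have hhigh : ∀ u ∈ uIcc c 1, 1 / (16 * max u c ^ 4) = 1 / (16 * u ^ (3 + 1)) := by
    intro u hu
    rw [uIcc_of_le hc1] at hu
    rw [max_eq_left hu.1]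
  rw [intervalIntegral.integral_congr hlow, intervalIntegral.integral_congr hhigh,
    intervalIntegral.integral_const, integral_one_div_mul_pow_succ hc hc1 _ (by norm_num)]
  have := hc.ne'
  rw [smul_eq_mul, sub_zero]
  field_simp
  ring

lemma continuousOn_one_div_two_mul_sq : ContinuousOn (fun y : ℝ => 1 / (2 * y ^ 2)) (Ioi 0) :=
  continuousOn_const.div (by fun_prop) fun y hy => by have : 0 < y := hy; positivity

instance : IsFiniteMeasure frozenNu := by
  have hint : IntegrableOn (fun y : ℝ => 1 / (2 * y ^ 2)) (Icc (1/2) 1) :=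
    (continuousOn_one_div_two_mul_sq.mono fun _ hx => one_half_pos.trans_le hx.1).integrableOn_Icc
  have : IsFiniteMeasure ((volume.restrict (Icc (1/2 : ℝ) 1)).withDensity fun y =>
      ENNReal.ofReal (1 / (2 * y ^ 2))) :=
    isFiniteMeasure_withDensity_ofReal hint.2
  have := Measure.smul_finite (Measure.dirac (∞ : ℝ≥0∞)) (c := 1/2) (by norm_num)
  unfold frozenNu
  infer_instance

lemma frozenNu_singleton_ofReal {y : ℝ} (hy : 0 < y) : frozenNu {ENNReal.ofReal y} = 0 := by
  have hpre : ENNReal.ofReal ⁻¹' {ENNReal.ofReal y} = {y} := by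
    ext x
    simp only [mem_preimage, mem_singleton_iff]
    refine ⟨fun hx => ?_, congrArg _⟩
    have hx0 : 0 < x := ENNReal.ofReal_pos.1 (hx ▸ ENNReal.ofReal_pos.2 hy)
    exact (ENNReal.ofReal_eq_ofReal_iff hx0.le hy.le).1 hx
  simp [frozenNu, Measure.map_apply ENNReal.measurable_ofReal (measurableSet_singleton _), hpre]

lemma frozenNu_Ioi_ofReal {y : ℝ} (hy : 1/2 ≤ y) (hy1 : y ≤ 1) :
    frozenNu (Ioi (ENNReal.ofReal y)) = ENNReal.ofReal (1 / (2 * y)) := by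
  have hy0 : 0 < y := by linarith
  have hpre : ENNReal.ofReal ⁻¹' Ioi (ENNReal.ofReal y) = Ioi y := by
    ext x
    exact ENNReal.ofReal_lt_ofReal_iff_of_nonneg hy0.le
  have hset : Ioi y ∩ Icc (1/2) 1 = Ioc y 1 := by
    ext x
    simp only [mem_inter_iff, mem_Ioi, mem_Icc, mem_Ioc]
    exact ⟨fun h => ⟨h.1, h.2.2⟩, fun h => ⟨h.1, by linarith [h.1], h.2⟩⟩
  have hdens : ∫⁻ x in Icc y 1, ENNReal.ofReal (1 / (2 * x ^ 2)) =
      ENNReal.ofReal (1 / (2 * y) - 1 / 2) := by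
    rw [setLIntegral_Icc_ofReal hy1
        (continuousOn_one_div_two_mul_sq.mono fun _ hx => hy0.trans_le hx.1)
        fun x _ => by positivity,
      (integral_one_div_mul_pow_succ hy0 hy1 2 one_ne_zero :
        ∫ x in y..1, 1 / (2 * x ^ 2) = _)]
    congr 1
    field_simp
    ring
  rw [frozenNu, Measure.add_apply, Measure.map_apply ENNReal.measurable_ofReal measurableSet_Ioi,
    hpre, withDensity_apply _ measurableSet_Ioi, Measure.restrict_restrict measurableSet_Ioi, hset,
    setLIntegral_congr Ioc_ae_eq_Icc, hdens, Measure.smul_apply,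
    Measure.dirac_apply_of_mem (mem_Ioi.2 ENNReal.ofReal_lt_top), smul_eq_mul, mul_one,
    show (1 / 2 : ℝ≥0∞) = ENNReal.ofReal (1 / 2) by simp [ENNReal.ofReal_inv_of_pos],
    ← ENNReal.ofReal_add _ (by norm_num), sub_add_cancel]
  rw [sub_nonneg]
  gcongr
  linarith

/-- The variable `Z`, as a function of `((Yᵢ)ᵢ, U)`. -/
noncomputable def joinTime {ι : Type*} (p : (ι → ℝ≥0∞) × ℝ) : ℝ≥0∞ :=
  if ENNReal.ofReal p.2 < ⨅ i, p.1 i then ⨅ i, p.1 i else ∞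

lemma measurable_joinTime {ι : Type*} [Countable ι] : Measurable (joinTime (ι := ι)) := by
  have hmin : Measurable fun p : (ι → ℝ≥0∞) × ℝ => ⨅ i, p.1 i :=
    Measurable.iInf fun i => (measurable_pi_apply i).comp measurable_fst
  exact Measurable.ite (measurableSet_lt (ENNReal.measurable_ofReal.comp measurable_snd) hmin)
    hmin measurable_const

lemma preimage_joinTime_Icc {ι : Type*} (u : ℝ) {c d : ℝ≥0∞} (hd : d ≠ ∞) :
    (fun y => (y, u)) ⁻¹' (joinTime (ι := ι) ⁻¹' Icc c d) =
      {y | ENNReal.ofReal u < ⨅ i, y i ∧ ⨅ i, y i ∈ Icc c d} := by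
  ext y
  by_cases h : ENNReal.ofReal u < ⨅ i, y i <;> simp [joinTime, h, hd]

lemma pi_frozenNu_ofReal_lt_iInf {y : ℝ} (hy : 1/2 ≤ y) (hy1 : y ≤ 1) :
    Measure.pi (fun _ : Fin 4 => frozenNu) {p | ENNReal.ofReal y < ⨅ i, p i} =
      ENNReal.ofReal (1 / (16 * y ^ 4)) := by
  have hy0 : y ≠ 0 := by positivity
  rw [pi_lt_iInf, frozenNu_Ioi_ofReal hy hy1, Fintype.card_fin,
    ← ENNReal.ofReal_pow (by positivity)]
  congr 1
  field_simp
  ring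

lemma pi_frozenNu_ofReal_lt_iInf_mem_Icc {a b u : ℝ} (ha : 1/2 ≤ a) (hab : a ≤ b)
    (hb : b ≤ 1) (hu : u ∈ Icc (0 : ℝ) 1) :
    Measure.pi (fun _ : Fin 4 => frozenNu) {p | ENNReal.ofReal u < ⨅ i, p i ∧
        ⨅ i, p i ∈ Icc (ENNReal.ofReal a) (ENNReal.ofReal b)} =
      ENNReal.ofReal (1 / (16 * max u a ^ 4) - 1 / (16 * max u b ^ 4)) := by
  have ha0 : 0 < a := by linarith
  have hmax_ge : ∀ {c}, 1/2 ≤ c → 1/2 ≤ max u c := fun hc => hc.trans (le_max_right u _)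
  have hmax_le : ∀ {c}, c ≤ 1 → max u c ≤ 1 := fun hc => max_le hu.2 hc
  rw [measure_lt_and_mem_Icc _ (Measurable.iInf fun i => measurable_pi_apply i)
      (ENNReal.ofReal_le_ofReal hab) (pi_iInf_eq_null _ (frozenNu_singleton_ofReal ha0)),
    ← ENNReal.ofReal_max, ← ENNReal.ofReal_max,
    pi_frozenNu_ofReal_lt_iInf (hmax_ge ha) (hmax_le (hab.trans hb)),
    pi_frozenNu_ofReal_lt_iInf (hmax_ge (ha.trans hab)) (hmax_le hb),
    ← ENNReal.ofReal_sub _ (by positivity)]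

lemma setLIntegral_Icc_zero_one_sub_max {a b : ℝ} (ha : 0 < a) (hab : a ≤ b) (hb : b ≤ 1) :
    ∫⁻ u in Icc (0 : ℝ) 1, ENNReal.ofReal (1 / (16 * max u a ^ 4) - 1 / (16 * max u b ^ 4)) =
      ENNReal.ofReal (1 / (12 * a ^ 3) - 1 / (12 * b ^ 3)) := by
  have hcont_a := continuous_one_div_mul_max_pow ha
  have hcont_b := continuous_one_div_mul_max_pow (ha.trans_le hab)
  have hnonneg : ∀ u ∈ Icc (0 : ℝ) 1,
      0 ≤ 1 / (16 * max u a ^ 4) - 1 / (16 * max u b ^ 4) := by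
    intro u _
    have : 0 < max u a := ha.trans_le (le_max_right u a)
    rw [sub_nonneg]
    gcongr
  rw [setLIntegral_Icc_ofReal zero_le_one (hcont_a.sub hcont_b).continuousOn (f := fun u =>
      1 / (16 * max u a ^ 4) - 1 / (16 * max u b ^ 4)) hnonneg,
    intervalIntegral.integral_sub (hcont_a.intervalIntegrable _ _) (hcont_b.intervalIntegrable _ _),
    integral_one_div_mul_max_pow ha (hab.trans hb),
    integral_one_div_mul_max_pow (ha.trans_le hab) hb, sub_sub_sub_cancel_right]

/-- With `Y₁,…,Y₄` i.i.d. from `frozenNu` and `U` uniform on `[0,1]`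
independent of them, define `Z = min(Y₁,…,Y₄)` if `U < min(Y₁,…,Y₄)` and `Z = ∞`
otherwise. Then `Z` has density `1/(4x⁴)` on `[1/2, 1]`: for all
`1/2 ≤ a ≤ b ≤ 1`, `P(Z ∈ [a,b]) = ∫_a^b 1/(4x⁴) dx`. -/
theorem frozen_percolation_edge_density
    (a b : ℝ) (ha : 1/2 ≤ a) (hab : a ≤ b) (hb : b ≤ 1) :
    Measure.map
        (fun p : (Fin 4 → ℝ≥0∞) × ℝ =>
          if ENNReal.ofReal p.2 < ⨅ i, p.1 i then ⨅ i, p.1 i else ∞)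
        ((Measure.pi fun _ : Fin 4 => frozenNu).prod
          (volume.restrict (Set.Icc (0:ℝ) 1)))
        (Set.Icc (ENNReal.ofReal a) (ENNReal.ofReal b)) =
      ENNReal.ofReal (∫ x in a..b, 1 / (4 * x ^ 4)) := by
  have ha0 : 0 < a := by linarith
  change Measure.map joinTime _ _ = _
  rw [Measure.map_apply measurable_joinTime measurableSet_Icc,
    Measure.prod_apply_symm (measurable_joinTime measurableSet_Icc)]
  simp only [preimage_joinTime_Icc _ ENNReal.ofReal_ne_top]
  rw [setLIntegral_congr_fun measurableSet_Icc fun u hu =>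
      pi_frozenNu_ofReal_lt_iInf_mem_Icc ha hab hb hu,
    setLIntegral_Icc_zero_one_sub_max ha0 hab hb,
    (integral_one_div_mul_pow_succ ha0 hab 4 three_ne_zero : ∫ x in a..b, 1 / (4 * x ^ 4) = _)]
  congr 1
  push_cast
  ring
end

section
/- Suppose F : (0,∞) → [0,1] is a differentiable distribution function satisfying F'(x) = F(x)(1 − F(x))/x for all x > 0, with F(x) → 1 as x → ∞. Then either F ≡ 1 on (0,∞), or there exists a > 0 such that F(x) = x/(a+x) for all x > 0. -/
open Set

/-! On `[0, 1]` the vector field `y ↦ y (1 - y) / x` is Lipschitz in `y`, uniformly for `x` bounded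
away from `0`, so a solution of `F' = F (1 - F) / x` with values in `[0, 1]` is determined by one of
its values. Since `F → 1` there is an `x₀ > 0` with `F x₀ > 0`, and `x ↦ x / (a + x)` with
`a = x₀ (1 - F x₀) / F x₀ ≥ 0` is a solution through `(x₀, F x₀)`; the case `a = 0` is `F ≡ 1`. -/

lemma lipschitzOnWith_mul_one_sub_div {m t : ℝ} (hm : 0 < m) (hmt : m ≤ t) :
    LipschitzOnWith (Real.toNNReal m⁻¹) (fun y : ℝ => y * (1 - y) / t) (Icc 0 1) := by
  refine LipschitzOnWith.of_dist_le_mul fun y hy z hz => ?_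
  have ht : 0 < t := hm.trans_le hmt
  have hyz : |1 - y - z| ≤ 1 := abs_le.2 ⟨by linarith [hy.2, hz.2], by linarith [hy.1, hz.1]⟩
  rw [Real.coe_toNNReal _ (inv_nonneg.2 hm.le), Real.dist_eq, Real.dist_eq,
    ← sub_div, abs_div, abs_of_pos ht, div_le_iff₀ ht]
  calc |y * (1 - y) - z * (1 - z)| = |y - z| * |1 - y - z| := by
        rw [← abs_mul]; ring_nf
    _ ≤ |y - z| := mul_le_of_le_one_right (abs_nonneg _) hyz
    _ ≤ m⁻¹ * |y - z| * t := by
        rw [mul_comm m⁻¹, mul_assoc]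
        exact le_mul_of_one_le_right (abs_nonneg _) ((one_le_inv_mul₀ hm).2 hmt)

theorem eqOn_Ioi_of_hasDerivAt_mul_one_sub_div {F G : ℝ → ℝ}
    (hF : ∀ x > 0, HasDerivAt F (F x * (1 - F x) / x) x ∧ F x ∈ Icc 0 1)
    (hG : ∀ x > 0, HasDerivAt G (G x * (1 - G x) / x) x ∧ G x ∈ Icc 0 1)
    {x₀ : ℝ} (hx₀ : 0 < x₀) (h : F x₀ = G x₀) : EqOn F G (Ioi 0) := by
  intro x hx
  have hmin : 0 < min x x₀ := lt_min hx hx₀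
  have hm : 0 < min x x₀ / 2 := half_pos hmin
  have hmem {y : ℝ} (h₁ : min x x₀ ≤ y) (h₂ : y ≤ max x x₀) :
      y ∈ Ioo (min x x₀ / 2) (max x x₀ + 1) :=
    ⟨by linarith, by linarith⟩
  exact ODE_solution_unique_of_mem_Ioo (v := fun t y => y * (1 - y) / t)
    (fun t ht => lipschitzOnWith_mul_one_sub_div hm ht.1.le)
    (hmem (min_le_right _ _) (le_max_right _ _))
    (fun t ht => hF t (hm.trans ht.1)) (fun t ht => hG t (hm.trans ht.1)) h
    (hmem (min_le_left _ _) (le_max_left _ _))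

lemma hasDerivAt_div_add_self {a x : ℝ} (ha : 0 ≤ a) (hx : 0 < x) :
    HasDerivAt (fun y => y / (a + y)) (x / (a + x) * (1 - x / (a + x)) / x) x := by
  have hax : a + x ≠ 0 := by positivity
  refine ((hasDerivAt_id' x).div ((hasDerivAt_id' x).const_add a) hax).congr_deriv ?_
  field_simp

lemma div_add_self_mem_Icc {a x : ℝ} (ha : 0 ≤ a) (hx : 0 < x) : x / (a + x) ∈ Icc 0 1 :=
  ⟨by positivity, div_le_one_of_le₀ (by linarith) (by positivity)⟩

theorem ode_characterization_of_max_rde_solutions_general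
    (F : ℝ → ℝ)
    (hrange : ∀ x > 0, F x ∈ Icc (0:ℝ) 1)
    (hderiv : ∀ x > 0, HasDerivAt F (F x * (1 - F x) / x) x)
    (hlim : Filter.Tendsto F Filter.atTop (nhds 1)) :
    (∀ x > 0, F x = 1) ∨ ∃ a > 0, ∀ x > 0, F x = x / (a + x) := by
  obtain ⟨x₀, hx₀, hFx₀⟩ : ∃ x₀ > 0, 0 < F x₀ :=
    ((Filter.eventually_gt_atTop 0).and (hlim.eventually (eventually_gt_nhds one_pos))).exists
  set a := x₀ * (1 - F x₀) / F x₀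
  have ha : 0 ≤ a := div_nonneg (mul_nonneg hx₀.le (sub_nonneg.2 (hrange x₀ hx₀).2)) hFx₀.le
  have hFa : EqOn F (fun x => x / (a + x)) (Ioi 0) :=
    eqOn_Ioi_of_hasDerivAt_mul_one_sub_div (fun x hx => ⟨hderiv x hx, hrange x hx⟩)
      (fun x hx => ⟨hasDerivAt_div_add_self ha hx, div_add_self_mem_Icc ha hx⟩) hx₀
      (by simp only [a]; field_simp; ring)
  rcases ha.eq_or_lt with ha0 | ha0
  · exact Or.inl fun x hx => by simp only [hFa hx, ← ha0, zero_add, div_self hx.ne']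
  · exact Or.inr ⟨a, ha0, fun x hx => hFa hx⟩

/-- Suppose `F : (0,∞) → [0,1]` is a differentiable distribution
function (nondecreasing on `(0,∞)`, with values in `[0,1]` and limit `1` at `∞`)
satisfying the ODE `F'(x) = F(x)(1 - F(x))/x` for all `x > 0`. Then either `F ≡ 1`
on `(0,∞)`, or there exists `a > 0` with `F(x) = x/(a+x)` for all `x > 0`. -/
theorem ode_characterization_of_max_rde_solutions
    (F : ℝ → ℝ)
    (hrange : ∀ x > 0, F x ∈ Icc (0:ℝ) 1)
    (hmono : MonotoneOn F (Ioi (0:ℝ)))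
    (hderiv : ∀ x > 0, HasDerivAt F (F x * (1 - F x) / x) x)
    (hlim : Filter.Tendsto F Filter.atTop (nhds 1)) :
    (∀ x > 0, F x = 1) ∨ ∃ a > 0, ∀ x > 0, F x = x / (a + x) :=
  ode_characterization_of_max_rde_solutions_general F hrange hderiv hlim
end

section
/- For i = 1, 2 let f_i : A → [0,∞) be functions on a nonempty set A with f_i* := sup f_i < ∞. For a ≥ 0 define q(a) := sup_{x∈A} (a·f_1(x) + f_2(x)). If a·f_1* > f_2*, then q(b) > q(a) for all b > a. -/
/-- **Lemma 35 of Aldous–Bandyopadhyay.** For `i = 1, 2` let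
`f_i : A → [0,∞)` be bounded functions on a nonempty set, with suprema `f_i*`.
Define `q(a) = sup_x (a·f₁(x) + f₂(x))`. If `a·f₁* > f₂*`, then `q(b) > q(a)`
for all `b > a`. -/
theorem sup_affine_strict_mono
    {A : Type*} [Nonempty A] (f₁ f₂ : A → ℝ)
    (h₁0 : ∀ x, 0 ≤ f₁ x) (h₂0 : ∀ x, 0 ≤ f₂ x)
    (h₁b : BddAbove (Set.range f₁)) (h₂b : BddAbove (Set.range f₂))
    (a : ℝ) (ha : 0 ≤ a)
    (hgt : (⨆ x, f₂ x) < a * ⨆ x, f₁ x) :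
    ∀ b > a, (⨆ x, (a * f₁ x + f₂ x)) < ⨆ x, (b * f₁ x + f₂ x) := by
  intro b hb
  obtain ⟨B₁, hB₁⟩ := h₁b
  obtain ⟨B₂, hB₂⟩ := h₂b
  have hB₁' : ∀ x, f₁ x ≤ B₁ := fun x => hB₁ ⟨x, rfl⟩
  have hB₂' : ∀ x, f₂ x ≤ B₂ := fun x => hB₂ ⟨x, rfl⟩
  set M₁ := ⨆ x, f₁ x with hM₁
  set M₂ := ⨆ x, f₂ x with hM₂
  have hM₂0 : 0 ≤ M₂ := Real.iSup_nonneg h₂0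
  have haM : 0 < a * M₁ := lt_of_le_of_lt hM₂0 hgt
  have hM₁0 : 0 ≤ M₁ := Real.iSup_nonneg h₁0
  have ha' : 0 < a := by
    rcases ha.lt_or_eq with h | h
    · exact h
    · exfalso; rw [← h] at haM; simp at haM
  have hb0 : 0 < b := lt_trans ha' hb
  have hba : 0 < b - a := sub_pos.2 hb
  set D := a * M₁ - M₂ with hD
  have hD0 : 0 < D := sub_pos.2 hgt
  set ε := (b - a) * D / (2 * b) with hε
  have hε0 : 0 < ε := by positivity
  have hεb : 2 * b * ε = (b - a) * D := by
    rw [hε]; field_simp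
  -- boundedness of the combined functions
  have hbddA : BddAbove (Set.range fun x => a * f₁ x + f₂ x) := by
    refine ⟨a * B₁ + B₂, ?_⟩
    rintro y ⟨x, rfl⟩
    have := hB₁' x
    have := hB₂' x
    dsimp only
    nlinarith [h₁0 x]
  have hbddB : BddAbove (Set.range fun x => b * f₁ x + f₂ x) := by
    refine ⟨b * B₁ + B₂, ?_⟩
    rintro y ⟨x, rfl⟩
    have := hB₁' x
    have := hB₂' x
    dsimp only
    nlinarith [h₁0 x]
  set qa := ⨆ x, (a * f₁ x + f₂ x) with hqa
  set qb := ⨆ x, (b * f₁ x + f₂ x) with hqb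
  -- a * M₁ ≤ qa
  have hM₁qa : M₁ ≤ qa / a := by
    refine ciSup_le fun x => ?_
    rw [le_div_iff₀ ha']
    have h1 : a * f₁ x + f₂ x ≤ qa := le_ciSup hbddA x
    have := h₂0 x
    linarith [mul_comm (f₁ x) a ▸ h1]
  have haMqa : a * M₁ ≤ qa := by
    have := mul_le_mul_of_nonneg_left hM₁qa ha'.le
    rwa [mul_div_cancel₀ _ ha'.ne'] at this
  -- pick a near-optimal point for qa
  obtain ⟨x, hx⟩ : ∃ x, qa - ε < a * f₁ x + f₂ x := by
    have : qa - ε < qa := by linarith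
    exact exists_lt_of_lt_ciSup this
  have hf₂x : f₂ x ≤ M₂ := le_ciSup ⟨B₂, hB₂⟩ x
  have hkey : D - ε < a * f₁ x := by
    have : a * M₁ - ε < a * f₁ x + f₂ x := lt_of_le_of_lt (by linarith) hx
    linarith
  have hqbx : b * f₁ x + f₂ x ≤ qb := le_ciSup hbddB x
  -- conclude
  nlinarith [mul_lt_mul_of_pos_left hkey hba, mul_pos hba hD0, h₁0 x,
    mul_le_mul_of_nonneg_left (h₁0 x) hba.le]
end

section
/- Let N be Poisson(1) and let c ≈ 0.715 be the unique strictly positive solution of c² + e^{−c} = 1. Define F(x) = exp(−c·e^{−x}) for x ≥ 0 (and F(x) = 0 for x < 0). Then F is a distribution function solving the RDE X =_d max(0, ξ_1 − X_1, …, ξ_N − X_N), where (ξ_i) are i.i.d. Exponential(1) and (X_i) are i.i.d. with distribution function F, all independent. -/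
/-!
Write `p = P(ξ - X ≤ y)`. Since `X ≥ 0` a.s. and `P(ξ > s) = e^{-s}`, for `y ≥ 0` we get
`1 - p = e^{-y} E[e^{-X}]`, and the layer-cake formula gives
`E[e^{-X}] = ∫₀¹ e^{-ct} dt = (1 - e^{-c}) / c`, which equals `c` exactly because
`c² + e^{-c} = 1`. Conditioning on `N`, independence gives
`P(max ≤ y) = E[p^N] = e^{p - 1} = exp(-c e^{-y})`.
-/

open MeasureTheory ProbabilityTheory Real Set
open scoped NNReal ENNReal

lemma tsum_poissonMeasure_singleton_mul_pow (r : ℝ≥0) {p : ℝ} (hp : 0 ≤ p) :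
    ∑' n, poissonMeasure r {n} * ENNReal.ofReal p ^ n = ENNReal.ofReal (exp (r * (p - 1))) := by
  have hsum := (NormedSpace.expSeries_div_hasSum_exp (r * p : ℝ)).mul_left (exp (-r))
  have hterm (n : ℕ) : poissonMeasure r {n} * ENNReal.ofReal p ^ n =
      ENNReal.ofReal (exp (-r) * ((r * p) ^ n / n.factorial)) := by
    rw [poissonMeasure_singleton, ← ENNReal.ofReal_pow hp, ← ENNReal.ofReal_mul (by positivity)]
    ring_nf
  simp_rw [hterm]
  rw [← ENNReal.ofReal_tsum_of_nonneg (fun n => by positivity) hsum.summable, hsum.tsum_eq,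
    ← exp_eq_exp_ℝ, ← exp_add]
  ring_nf

lemma expMeasure_Ioi {r : ℝ} (hr : 0 < r) {x : ℝ} (hx : 0 ≤ x) :
    expMeasure r (Ioi x) = ENNReal.ofReal (exp (-(r * x))) := by
  have := isProbabilityMeasure_expMeasure hr
  rw [← compl_Iic, prob_compl_eq_one_sub measurableSet_Iic, ← ofReal_cdf, cdf_expMeasure_eq hr,
    if_pos hx, ENNReal.ofReal_sub _ (exp_pos _).le, ENNReal.ofReal_one,
    ENNReal.sub_sub_cancel ENNReal.one_ne_top]
  exact ENNReal.ofReal_le_one.2 (exp_le_one_iff.2 (by nlinarith))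

lemma ae_nonneg_of_measure_Iic_eq_zero {μ : Measure ℝ} (h : ∀ y < 0, μ (Iic y) = 0) :
    ∀ᵐ x ∂μ, 0 ≤ x := by
  have hIio : ⋃ n : ℕ, Iic (-(1 / ((n : ℝ) + 1))) = Iio 0 :=
    iUnion_Iic_eq_Iio_of_lt_of_tendsto (fun n => by simp only [Left.neg_neg_iff]; positivity)
      (by simpa using (tendsto_one_div_add_atTop_nhds_zero_nat (𝕜 := ℝ)).neg)
  show Ici 0 ∈ ae μ
  rw [mem_ae_iff, compl_Ici, ← hIio]
  exact measure_iUnion_null fun n => h _ (by simp only [Left.neg_neg_iff]; positivity)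

lemma integral_zero_one_exp_neg_mul {c : ℝ} (hc : c ≠ 0) :
    ∫ t in (0 : ℝ)..1, exp (-(c * t)) = (1 - exp (-c)) / c := by
  simp_rw [← neg_mul]
  rw [intervalIntegral.integral_comp_mul_left (fun t => exp t) (neg_ne_zero.2 hc), integral_exp,
    mul_zero, mul_one, exp_zero, smul_eq_mul]
  field_simp
  ring

lemma lintegral_exp_neg_eq_of_measure_Iic {c : ℝ} (hc : c ≠ 0) {μ : Measure ℝ}
    (hμ : ∀ y, μ (Iic y) = ENNReal.ofReal (if y < 0 then 0 else exp (-(c * exp (-y))))) :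
    ∫⁻ x, ENNReal.ofReal (exp (-x)) ∂μ = ENNReal.ofReal ((1 - exp (-c)) / c) := by
  have hlevel : ∀ t ∈ Ioi (0 : ℝ),
      μ {x | t ≤ exp (-x)} = (Iic 1).indicator (fun t => ENNReal.ofReal (exp (-(c * t)))) t := by
    intro t (ht : 0 < t)
    have hset : {x | t ≤ exp (-x)} = Iic (-log t) := by
      ext x
      change t ≤ exp (-x) ↔ x ≤ -log t
      rw [← log_le_iff_le_exp ht, le_neg]
    rw [hset, hμ, neg_neg, exp_log ht]
    simp only [neg_lt_zero, log_pos_iff ht.le]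
    by_cases h1 : t ≤ 1
    · simp [h1, not_lt.2 h1]
    · simp [h1, not_le.1 h1]
  rw [lintegral_eq_lintegral_meas_le μ (ae_of_all _ fun x => (exp_pos _).le) (by fun_prop),
    setLIntegral_congr_fun measurableSet_Ioi hlevel, lintegral_indicator measurableSet_Iic,
    Measure.restrict_restrict measurableSet_Iic, Iic_inter_Ioi,
    ← ofReal_integral_eq_lintegral_ofReal, ← intervalIntegral.integral_of_le zero_le_one,
    integral_zero_one_exp_neg_mul hc]
  · exact (by fun_prop : Continuous fun t => exp (-(c * t))).integrableOn_Ioc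
  · exact ae_of_all _ fun t => (exp_pos _).le

lemma expMeasure_prod_setOf_sub_le {r y : ℝ} (hr : 0 < r) (hy : 0 ≤ y) {μ : Measure ℝ}
    [IsProbabilityMeasure μ] (hμ : ∀ᵐ x ∂μ, 0 ≤ x) :
    ((expMeasure r).prod μ) {p | p.1 - p.2 ≤ y} =
      1 - ENNReal.ofReal (exp (-(r * y))) * ∫⁻ x, ENNReal.ofReal (exp (-(r * x))) ∂μ := by
  have := isProbabilityMeasure_expMeasure hr
  have hS : MeasurableSet {p : ℝ × ℝ | y < p.1 - p.2} :=
    measurableSet_lt (by fun_prop) (by fun_prop)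
  have htail : ((expMeasure r).prod μ) {p | y < p.1 - p.2} =
      ENNReal.ofReal (exp (-(r * y))) * ∫⁻ x, ENNReal.ofReal (exp (-(r * x))) ∂μ := by
    rw [Measure.prod_apply_symm hS, ← lintegral_const_mul _ (by fun_prop)]
    refine lintegral_congr_ae (hμ.mono fun x hx => ?_)
    dsimp only
    have hsection : (fun a => (a, x)) ⁻¹' {p : ℝ × ℝ | y < p.1 - p.2} = Ioi (y + x) := by
      ext a
      simp [lt_sub_iff_add_lt]
    rw [hsection, expMeasure_Ioi hr (by linarith), ← ENNReal.ofReal_mul (exp_pos _).le,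
      ← exp_add]
    ring_nf
  rw [← htail, ← prob_compl_eq_one_sub hS]
  congr 1
  ext p
  simp

lemma expMeasure_one_prod_setOf_sub_le {c y : ℝ} (hc : 0 < c) (hcfix : c ^ 2 + exp (-c) = 1)
    (hy : 0 ≤ y) {μ : Measure ℝ} [IsProbabilityMeasure μ]
    (hμ : ∀ y, μ (Iic y) = ENNReal.ofReal (if y < 0 then 0 else exp (-(c * exp (-y))))) :
    ((expMeasure 1).prod μ) {p | p.1 - p.2 ≤ y} = ENNReal.ofReal (1 - c * exp (-y)) := by
  have hlaplace : ∫⁻ x, ENNReal.ofReal (exp (-x)) ∂μ = ENNReal.ofReal c := by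
    rw [lintegral_exp_neg_eq_of_measure_Iic hc.ne' hμ]
    congr 1
    field_simp
    linarith
  have hμ_nonneg : ∀ᵐ x ∂μ, 0 ≤ x :=
    ae_nonneg_of_measure_Iic_eq_zero fun y hy => by simp [hμ, hy]
  rw [expMeasure_prod_setOf_sub_le one_pos hy hμ_nonneg]
  simp only [one_mul, hlaplace]
  rw [← ENNReal.ofReal_mul (exp_pos _).le, ← ENNReal.ofReal_one,
    ← ENNReal.ofReal_sub _ (by positivity), mul_comm]

lemma coe_finset_sup_toNNReal_le_iff {ι : Type*} (s : Finset ι) (f : ι → ℝ) {y : ℝ}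
    (hy : 0 ≤ y) :
    ((s.sup fun i => (f i).toNNReal : ℝ≥0) : ℝ) ≤ y ↔ ∀ i ∈ s, f i ≤ y := by
  rw [← Real.le_toNNReal_iff_coe_le hy, Finset.sup_le_iff]
  exact forall₂_congr fun i _ => Real.toNNReal_le_toNNReal_iff hy

theorem measure_forall_lt_mem_eq_tsum {Ω E : Type*} [MeasurableSpace Ω] [MeasurableSpace E]
    {P : Measure Ω} {N : Ω → ℕ} {X : ℕ → Ω → E} (hN : AEMeasurable N P)
    (hX : ∀ i, AEMeasurable (X i) P) (hXindep : iIndepFun X P)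
    (hNX : IndepFun N (fun ω i => X i ω) P) {S : Set E} (hS : MeasurableSet S) {q : ℝ≥0∞}
    (hq : ∀ i, P (X i ⁻¹' S) = q) :
    P {ω | ∀ i < N ω, X i ω ∈ S} = ∑' n, P (N ⁻¹' {n}) * q ^ n := by
  set T : ℕ → Set (ℕ → E) := fun n => ⋂ i ∈ Finset.range n, Function.eval i ⁻¹' S
  have hT (n : ℕ) : MeasurableSet (T n) :=
    Finset.measurableSet_biInter _ fun i _ => measurable_pi_apply i hS
  have hunion :
    {ω | ∀ i < N ω, X i ω ∈ S} = ⋃ n, N ⁻¹' {n} ∩ (fun ω i => X i ω) ⁻¹' T n := by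
    ext ω
    simp [T]
  rw [hunion, measure_iUnion₀]
  · congr 1
    funext n
    have hprod : (fun ω i => X i ω) ⁻¹' T n = ⋂ i ∈ Finset.range n, X i ⁻¹' S := by
      ext
      simp [T]
    rw [hNX.measure_inter_preimage_eq_mul _ _ (measurableSet_singleton n) (hT n), hprod,
      hXindep.measure_inter_preimage_eq_mul (Finset.range n) (sets := fun _ => S) fun _ _ => hS]
    simp [hq]
  · refine fun m n hmn => Disjoint.aedisjoint ?_
    exact ((disjoint_singleton.2 hmn).preimage N).mono inter_subset_left inter_subset_left
  · exact fun n => (hN.nullMeasurable (measurableSet_singleton n)).inter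
      ((aemeasurable_pi_iff.2 hX).nullMeasurable (hT n))

theorem exponential_matching_rde_general
    {Ω : Type*} [MeasurableSpace Ω] (P : Measure Ω)
    (c : ℝ) (hc : 0 < c) (hcfix : c ^ 2 + Real.exp (-c) = 1)
    (μ : Measure ℝ) [IsProbabilityMeasure μ]
    (hμcdf : ∀ y : ℝ, μ (Set.Iic y) =
      ENNReal.ofReal (if y < 0 then 0 else Real.exp (-(c * Real.exp (-y)))))
    (N : Ω → ℕ) (pair : ℕ → Ω → ℝ × ℝ)
    (hN : Measure.map N P = poissonMeasure 1)
    (hpairIndep : iIndepFun pair P)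
    (hpairLaw : ∀ i, Measure.map (pair i) P = (expMeasure 1).prod μ)
    (hNindep : IndepFun N (fun ω i => pair i ω) P) :
    ∀ y : ℝ,
      P {ω | (((Finset.range (N ω)).sup fun i =>
          Real.toNNReal ((pair i ω).1 - (pair i ω).2) : NNReal) : ℝ) ≤ y} =
        ENNReal.ofReal (if y < 0 then 0 else Real.exp (-(c * Real.exp (-y)))) := by
  intro y
  rcases lt_or_ge y 0 with hy | hy
  · rw [if_pos hy, ENNReal.ofReal_zero]
    exact measure_mono_null
      (fun ω hω => absurd hω (not_le.2 (hy.trans_le (NNReal.coe_nonneg _)))) measure_empty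
  have := isProbabilityMeasure_expMeasure one_pos
  have hNmeas : AEMeasurable N P := .of_map_ne_zero (hN ▸ IsProbabilityMeasure.ne_zero _)
  have hpairMeas (i : ℕ) : AEMeasurable (pair i) P :=
    .of_map_ne_zero (hpairLaw i ▸ IsProbabilityMeasure.ne_zero _)
  set S : Set (ℝ × ℝ) := {p | p.1 - p.2 ≤ y}
  have hS : MeasurableSet S := measurableSet_le (by fun_prop) (by fun_prop)
  have hevent : {ω | (((Finset.range (N ω)).sup fun i =>
      Real.toNNReal ((pair i ω).1 - (pair i ω).2) : NNReal) : ℝ) ≤ y} =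
      {ω | ∀ i < N ω, pair i ω ∈ S} := by
    ext ω
    simp [S, coe_finset_sup_toNNReal_le_iff _ _ hy]
  have hq (i : ℕ) : P (pair i ⁻¹' S) = ENNReal.ofReal (1 - c * exp (-y)) := by
    rw [← Measure.map_apply_of_aemeasurable (hpairMeas i) hS, hpairLaw,
      expMeasure_one_prod_setOf_sub_le hc hcfix hy hμcdf]
  have hNlaw (n : ℕ) : P (N ⁻¹' {n}) = poissonMeasure 1 {n} := by
    rw [← hN, Measure.map_apply_of_aemeasurable hNmeas (measurableSet_singleton n)]
  have hp : 0 ≤ 1 - c * exp (-y) := by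
    nlinarith [exp_le_one_iff.2 (neg_nonpos.2 hy), exp_pos (-y), exp_pos (-c)]
  rw [hevent, measure_forall_lt_mem_eq_tsum hNmeas hpairMeas hpairIndep hNindep hS hq]
  simp_rw [hNlaw]
  rw [tsum_poissonMeasure_singleton_mul_pow 1 hp, if_neg (not_lt.2 hy)]
  push_cast
  congr 2
  ring

/-- Let `N` be Poisson(1), `c > 0` the unique solution of
`c² + e^{-c} = 1`, and `F(x) = exp(-c e^{-x})` for `x ≥ 0` (`F(x) = 0` for `x < 0`).
If `(ξ_i)` are i.i.d. Exponential(1) and `(X_i)` i.i.d. with distribution function `F`,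
all independent, then `max(0, ξ_1 - X_1, …, ξ_N - X_N)` again has distribution
function `F` (the maximum over an empty index set being `0`). -/
theorem exponential_matching_rde
    {Ω : Type*} [MeasurableSpace Ω] (P : Measure Ω) [IsProbabilityMeasure P]
    (c : ℝ) (hc : 0 < c) (hcfix : c ^ 2 + Real.exp (-c) = 1)
    (μ : Measure ℝ) [IsProbabilityMeasure μ]
    (hμcdf : ∀ y : ℝ, μ (Set.Iic y) =
      ENNReal.ofReal (if y < 0 then 0 else Real.exp (-(c * Real.exp (-y)))))
    (N : Ω → ℕ) (pair : ℕ → Ω → ℝ × ℝ)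
    (hN : Measure.map N P = poissonMeasure 1)
    (hpairIndep : iIndepFun pair P)
    (hpairLaw : ∀ i, Measure.map (pair i) P = (expMeasure 1).prod μ)
    (hNindep : IndepFun N (fun ω i => pair i ω) P) :
    ∀ y : ℝ,
      P {ω | (((Finset.range (N ω)).sup fun i =>
          Real.toNNReal ((pair i ω).1 - (pair i ω).2) : NNReal) : ℝ) ≤ y} =
        ENNReal.ofReal (if y < 0 then 0 else Real.exp (-(c * Real.exp (-y)))) :=
  exponential_matching_rde_general P c hc hcfix μ hμcdf N pair hN hpairIndep hpairLaw hNindep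
end

section
/- Let p_0 < 1. For each n, let (C_{n,i}, i ≥ 1) be independent events with P(C_{n,i}) ≤ p_0 for all i, and suppose S_n := Σ_i 1_{C_{n,i}} converges in distribution (in the compactified nonnegative integers {0,1,2,…,∞}) to a random variable M*. Then either P(M* = 0) > 0 or P(M* = ∞) = 1. -/
open MeasureTheory ProbabilityTheory Filter
open scoped ENNReal Topology

/-! For `S = eventCount C`, independence gives `E[2^{-S}] = ∏ᵢ (1 - P(Cᵢ)/2)`, so by Markov
`2^{-k} P(S < k) ≤ ∏ᵢ (1 - P(Cᵢ)/2)`. Since `P(Cᵢ) ≤ p₀ < 1`, one fixed power `K`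
satisfies `(1 - q/2)^K ≤ 1 - q` for all `q ≤ p₀`, hence
`(2^{-k} P(S < k))^K ≤ ∏ᵢ (1 - P(Cᵢ)) = P(S = 0)`.
So if `P(M* = 0) = 0`, then `P(S_n = 0) → 0`, hence `P(S_n < k) → 0` for every `k`, and the
tail convergence gives `P(M* ≥ k) = 1` for every `k`. -/

lemma one_sub_half_pow_le_one_sub {x : ℝ} {K : ℕ} (hx : 0 ≤ x) (hK : 2 ≤ K * (1 - x)) :
    (1 - x / 2) ^ K ≤ 1 - x := by
  have hx1 : 0 < 1 - x := by
    by_contra! h; nlinarith [(K.cast_nonneg : (0:ℝ) ≤ K)]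
  have hgrow : 1 ≤ (1 - x) * (1 + K * (x / 2)) := by nlinarith
  have hbern : 1 + K * (x / 2) ≤ (1 + x / 2) ^ K := one_add_mul_le_pow (by linarith) K
  have hprod : (1 - x / 2) ^ K * (1 + x / 2) ^ K ≤ 1 := by
    rw [← mul_pow]; exact pow_le_one₀ (by nlinarith) (by nlinarith)
  have hpos : 0 ≤ (1 - x / 2) ^ K := pow_nonneg (by linarith) K
  calc (1 - x / 2) ^ K ≤ (1 - x / 2) ^ K * ((1 - x) * (1 + K * (x / 2))) :=
        le_mul_of_one_le_right hpos hgrow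
    _ ≤ (1 - x / 2) ^ K * ((1 - x) * (1 + x / 2) ^ K) := by gcongr
    _ = (1 - x) * ((1 - x / 2) ^ K * (1 + x / 2) ^ K) := by ring
    _ ≤ 1 - x := mul_le_of_le_one_right hx1.le hprod

namespace ENNReal

lemma one_sub_half_pow_le_one_sub {q : ℝ≥0∞} {K : ℕ} (hq : q ≤ 1)
    (hK : 2 ≤ K * (1 - q)) : (1 - q / 2) ^ K ≤ 1 - q := by
  have hq2 : q / 2 ≤ 1 := ENNReal.half_le_self.trans hq
  have hKreal : 2 ≤ K * (1 - q.toReal) := by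
    have := ENNReal.toReal_mono (by finiteness) hK
    rwa [ENNReal.toReal_mul, ENNReal.toReal_sub_of_le hq ENNReal.one_ne_top] at this
  rw [← ENNReal.toReal_le_toReal (by finiteness) (by finiteness), ENNReal.toReal_pow,
    ENNReal.toReal_sub_of_le hq ENNReal.one_ne_top, ENNReal.toReal_sub_of_le hq2 ENNReal.one_ne_top,
    ENNReal.toReal_div]
  simpa using _root_.one_sub_half_pow_le_one_sub ENNReal.toReal_nonneg hKreal

lemma half_add_one_sub {q : ℝ≥0∞} (hq : q ≤ 1) : q / 2 + (1 - q) = 1 - q / 2 := by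
  have hq_top : q ≠ ∞ := ne_top_of_le_ne_top ENNReal.one_ne_top hq
  refine (ENNReal.sub_eq_of_eq_add (ENNReal.div_ne_top hq_top two_ne_zero) ?_).symm
  rw [add_right_comm, ENNReal.add_halves, add_tsub_cancel_of_le hq]

lemma tendsto_nhds_zero_of_tendsto_pow {α : Type*} {l : Filter α} {f : α → ℝ≥0∞}
    {K : ℕ} (hK : K ≠ 0) (h : Tendsto (fun x => f x ^ K) l (𝓝 0)) :
    Tendsto f l (𝓝 0) := by
  have := (ENNReal.continuous_rpow_const (y := (K⁻¹ : ℝ))).tendsto 0 |>.comp h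
  rw [ENNReal.zero_rpow_of_pos (by positivity)] at this
  simpa only [Function.comp_def, ENNReal.pow_rpow_inv_natCast hK] using this

lemma tendsto_nhds_zero_of_tendsto_const_mul {α : Type*} {l : Filter α} {f : α → ℝ≥0∞}
    {c : ℝ≥0∞} (hc₀ : c ≠ 0) (hc : c ≠ ∞)
    (h : Tendsto (fun x => c * f x) l (𝓝 0)) :
    Tendsto f l (𝓝 0) := by
  simpa [← mul_assoc, ENNReal.inv_mul_cancel hc₀ hc] using
    ENNReal.Tendsto.const_mul h (Or.inr (ENNReal.inv_ne_top.2 hc₀)) (a := c⁻¹)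

end ENNReal

noncomputable def eventCount {Ω : Type*} (C : ℕ → Set Ω) (ω : Ω) : ℝ≥0∞ :=
  ∑' i, (C i).indicator (fun _ => 1) ω

lemma setOf_eventCount_eq_zero {Ω : Type*} (C : ℕ → Set Ω) :
    {ω | eventCount C ω = 0} = ⋂ i, (C i)ᶜ := by
  ext ω
  simp [eventCount, Set.indicator_apply_eq_zero]

lemma sum_indicator_le_eventCount {Ω : Type*} {C : ℕ → Set Ω} (s : Finset ℕ) (ω : Ω) :
    ((∑ i ∈ s, (C i).indicator (fun _ => 1) ω : ℕ) : ℝ≥0∞) ≤ eventCount C ω := by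
  push_cast
  refine le_trans (le_of_eq (Finset.sum_congr rfl fun i _ => ?_)) (ENNReal.sum_le_tsum s)
  by_cases h : ω ∈ C i <;> simp [h]

section

variable {Ω : Type*} [MeasurableSpace Ω] {μ : Measure Ω} [IsProbabilityMeasure μ]

lemma lintegral_inv_two_pow_indicator {s : Set Ω} (hs : MeasurableSet s) :
    ∫⁻ ω, 2⁻¹ ^ s.indicator (fun _ => 1) ω ∂μ = 1 - μ s / 2 := by
  classical
  have hpiece : (fun ω => (2⁻¹ : ℝ≥0∞) ^ s.indicator (fun _ => 1) ω)
      = s.piecewise (fun _ => 2⁻¹) (fun _ => 1) := by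
    ext ω; by_cases h : ω ∈ s <;> simp [h]
  rw [hpiece, lintegral_piecewise hs, setLIntegral_const, setLIntegral_const,
    prob_compl_eq_one_sub hs, one_mul, mul_comm, ← div_eq_mul_inv,
    ENNReal.half_add_one_sub prob_le_one]

lemma eq_one_of_tendsto_measure_of_tendsto_measure_compl {α : Type*} {l : Filter α} [l.NeBot]
    {A : α → Set Ω} {a : ℝ≥0∞} (hA : Tendsto (fun x => μ (A x)) l (𝓝 a))
    (hAc : Tendsto (fun x => μ (A x)ᶜ) l (𝓝 0)) : a = 1 := by
  refine le_antisymm (le_of_tendsto' hA fun _ => prob_le_one) ?_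
  have hsum := hA.add hAc
  rw [add_zero] at hsum
  exact ge_of_tendsto' hsum fun x => by
    simpa only [measure_univ] using measure_univ_le_add_compl (μ := μ) (A x)

lemma measure_eq_top_eq_one_of_measure_natCast_le_eq_one {M : Ω → ℝ≥0∞} (hM : Measurable M)
    (h : ∀ k : ℕ, μ {ω | (k : ℝ≥0∞) ≤ M ω} = 1) : μ {ω | M ω = ∞} = 1 := by
  have hae : ∀ᵐ ω ∂μ, ∀ k : ℕ, (k : ℝ≥0∞) ≤ M ω := ae_all_iff.2 fun k =>
    (ae_iff_measure_eq (hM measurableSet_Ici).nullMeasurableSet).2 ((h k).trans measure_univ.symm)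
  have hae_top : ∀ᵐ ω ∂μ, M ω = ∞ := hae.mono fun ω hω => by
    by_contra hne
    obtain ⟨k, hk⟩ := ENNReal.exists_nat_gt hne
    exact (hω k).not_gt hk
  rw [← measure_univ (μ := μ)]
  exact (ae_iff_measure_eq (hM (measurableSet_singleton ∞)).nullMeasurableSet).1 hae_top

variable {C : ℕ → Set Ω}

lemma measure_biInter_compl_eq_prod (hC : ∀ i, MeasurableSet (C i)) (hindep : iIndepSet C μ)
    (s : Finset ℕ) : μ (⋂ i ∈ s, (C i)ᶜ) = ∏ i ∈ s, (1 - μ (C i)) := by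
  rw [(iIndepSet_iff C μ).1 hindep s fun i _ =>
    (MeasurableSpace.measurableSet_generateFrom (Set.mem_singleton _)).compl]
  exact Finset.prod_congr rfl fun i _ => prob_compl_eq_one_sub (hC i)

lemma inv_two_pow_mul_measure_eventCount_lt_le (hC : ∀ i, MeasurableSet (C i))
    (hindep : iIndepSet C μ) (k : ℕ) (s : Finset ℕ) :
    2⁻¹ ^ k * μ {ω | eventCount C ω < k} ≤ ∏ i ∈ s, (1 - μ (C i) / 2) := by
  set X : ℕ → Ω → ℝ≥0∞ := fun i ω => 2⁻¹ ^ (C i).indicator (fun _ => 1) ω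
  have hXmeas : ∀ i, Measurable (X i) := fun i =>
    (measurable_const.indicator (hC i)).const_pow _
  have hXindep : iIndepFun X μ :=
    hindep.iIndepFun_indicator.comp (fun _ n => (2⁻¹ : ℝ≥0∞) ^ n)
      fun _ => measurable_from_nat
  have hsub : {ω | eventCount C ω < k} ⊆ {ω | 2⁻¹ ^ k ≤ ∏ i ∈ s, X i ω} := by
    intro ω hω
    simp only [Set.mem_ofPred_eq, X, Finset.prod_pow_eq_pow_sum]
    refine pow_le_pow_right_of_le_one' (by norm_num) ?_
    exact_mod_cast ((sum_indicator_le_eventCount s ω).trans_lt hω).le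
  calc 2⁻¹ ^ k * μ {ω | eventCount C ω < k}
      ≤ 2⁻¹ ^ k * μ {ω | 2⁻¹ ^ k ≤ ∏ i ∈ s, X i ω} := by gcongr
    _ ≤ ∫⁻ ω, ∏ i ∈ s, X i ω ∂μ :=
      mul_meas_ge_le_lintegral₀ (s.measurable_prod fun i _ => hXmeas i).aemeasurable _
    _ = ∏ i ∈ s, (1 - μ (C i) / 2) := by
      rw [lintegral_prod_eq_prod_lintegral_of_indepFun s X hXindep hXmeas]
      exact Finset.prod_congr rfl fun i _ => lintegral_inv_two_pow_indicator (hC i)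

lemma inv_two_pow_mul_measure_eventCount_lt_pow_le (hC : ∀ i, MeasurableSet (C i))
    (hindep : iIndepSet C μ) {K : ℕ} (hK : ∀ i, 2 ≤ K * (1 - μ (C i))) (k : ℕ) :
    (2⁻¹ ^ k * μ {ω | eventCount C ω < k}) ^ K ≤ μ {ω | eventCount C ω = 0} := by
  rw [setOf_eventCount_eq_zero, measure_iInter_eq_iInf_measure_iInter_le
    (fun i => (hC i).compl.nullMeasurableSet) ⟨0, measure_ne_top _ _⟩]
  refine le_iInf fun N => ?_
  have hIic : ⋂ j ≤ N, (C j)ᶜ = ⋂ j ∈ Finset.Iic N, (C j)ᶜ := by simp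
  calc (2⁻¹ ^ k * μ {ω | eventCount C ω < k}) ^ K
      ≤ (∏ i ∈ Finset.Iic N, (1 - μ (C i) / 2)) ^ K :=
        pow_le_pow_left₀ zero_le (inv_two_pow_mul_measure_eventCount_lt_le hC hindep k _) K
    _ = ∏ i ∈ Finset.Iic N, (1 - μ (C i) / 2) ^ K := (Finset.prod_pow _ _ _).symm
    _ ≤ ∏ i ∈ Finset.Iic N, (1 - μ (C i)) := Finset.prod_le_prod' fun i _ =>
        ENNReal.one_sub_half_pow_le_one_sub prob_le_one (hK i)
    _ = μ (⋂ j ≤ N, (C j)ᶜ) := by rw [hIic, measure_biInter_compl_eq_prod hC hindep]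

lemma tendsto_measure_eventCount_lt_of_tendsto_measure_eventCount_eq_zero
    {C : ℕ → ℕ → Set Ω} (hC : ∀ n i, MeasurableSet (C n i))
    (hindep : ∀ n, iIndepSet (C n) μ)
    {K : ℕ} (hK : ∀ n i, 2 ≤ K * (1 - μ (C n i)))
    (h0 : Tendsto (fun n => μ {ω | eventCount (C n) ω = 0}) atTop (𝓝 0)) (k : ℕ) :
    Tendsto (fun n => μ {ω | eventCount (C n) ω < k}) atTop (𝓝 0) := by
  have hK₀ : K ≠ 0 := by
    rintro rfl
    simpa using hK 0 0
  have hpow :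
      Tendsto (fun n => (2⁻¹ ^ k * μ {ω | eventCount (C n) ω < k}) ^ K) atTop (𝓝 0) :=
    tendsto_of_tendsto_of_tendsto_of_le_of_le tendsto_const_nhds h0 (fun _ => zero_le)
      fun n => inv_two_pow_mul_measure_eventCount_lt_pow_le (hC n) (hindep n) (hK n) k
  exact ENNReal.tendsto_nhds_zero_of_tendsto_const_mul (by simp) (by simp)
    (ENNReal.tendsto_nhds_zero_of_tendsto_pow hK₀ hpow)

end

lemma exists_two_le_nat_mul_one_sub {p : ℝ} (hp : p < 1) :
    ∃ K : ℕ, ∀ q ≤ ENNReal.ofReal p, 2 ≤ K * (1 - q) := by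
  have hgap : 1 - ENNReal.ofReal p ≠ 0 := (tsub_pos_of_lt (ENNReal.ofReal_lt_one.2 hp)).ne'
  obtain ⟨K, hK⟩ := ENNReal.exists_nat_mul_gt hgap (b := 2) ENNReal.ofNat_ne_top
  exact ⟨K, fun q hq => hK.le.trans (by gcongr)⟩

/-- **Lemma 50 of Aldous–Bandyopadhyay.** Let `p₀ < 1`. For each `n`
let `(C_{n,i})_{i≥1}` be independent events with `P(C_{n,i}) ≤ p₀`, and suppose
`S_n = ∑_i 1_{C_{n,i}}` converges in distribution in the compactified nonnegative
integers to a random variable `M*` (pointwise convergence of the probabilities of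
`{S_n = k}` for finite `k` and of the tails `{S_n ≥ k}`). Then either
`P(M* = 0) > 0` or `P(M* = ∞) = 1`. -/
theorem zero_or_infinity_dichotomy
    {Ω : Type*} [MeasurableSpace Ω] (P : Measure Ω) [IsProbabilityMeasure P]
    (p₀ : ℝ) (hp₀ : p₀ < 1)
    (C : ℕ → ℕ → Set Ω)
    (hmeas : ∀ n i, MeasurableSet (C n i))
    (hindep : ∀ n, iIndepSet (C n) P)
    (hbound : ∀ n i, P (C n i) ≤ ENNReal.ofReal p₀)
    (Mstar : Ω → ℝ≥0∞) (hMmeas : Measurable Mstar)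
    (hconv : ∀ k : ℕ,
      Filter.Tendsto (fun n => P {ω | (∑' i, (C n i).indicator (fun _ => (1:ℝ≥0∞)) ω) = k})
        Filter.atTop (nhds (P {ω | Mstar ω = k})))
    (hconvTail : ∀ k : ℕ,
      Filter.Tendsto (fun n => P {ω | (k:ℝ≥0∞) ≤ ∑' i, (C n i).indicator (fun _ => (1:ℝ≥0∞)) ω})
        Filter.atTop (nhds (P {ω | (k:ℝ≥0∞) ≤ Mstar ω}))) :
    0 < P {ω | Mstar ω = 0} ∨ P {ω | Mstar ω = ∞} = 1 := by
  rcases eq_zero_or_pos (P {ω | Mstar ω = 0}) with h0 | h0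
  · right
    obtain ⟨K, hK⟩ := exists_two_le_nat_mul_one_sub hp₀
    have hzero : Tendsto (fun n => P {ω | eventCount (C n) ω = 0}) atTop (𝓝 0) := by
      have := hconv 0
      rwa [Nat.cast_zero, h0] at this
    refine measure_eq_top_eq_one_of_measure_natCast_le_eq_one hMmeas fun k => ?_
    refine eq_one_of_tendsto_measure_of_tendsto_measure_compl (hconvTail k) ?_
    simp only [Set.compl_ofPred, not_le]
    exact tendsto_measure_eventCount_lt_of_tendsto_measure_eventCount_eq_zero hmeas hindep
      (fun n i => hK _ (hbound n i)) hzero k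
  · exact Or.inl h0
end

section
/- Suppose (ξ_i, 1 ≤ i ≤ N) are nonnegative random variables with random N < ∞, and let (X, Y) be a pair of integrable nonnegative random variables with equal means, such that (X, Y) =_d (Σ_i ξ_i X_i, Σ_i ξ_i Y_i) where ((X_i, Y_i)) are i.i.d. copies of (X, Y) independent of (ξ, N). Then |Σ_i ξ_i (X_i − Y_i)| = Σ_i ξ_i |X_i − Y_i| almost surely. -/
/-!
Write `Zᵢ = Xᵢ - Yᵢ` and `ζ = E|X - Y| < ∞`. The fixed-point equation gives
`E|∑_{i<N} ξᵢ Zᵢ| = ζ`, while Wald's identity for the weighted random sum, with `(N, ξ)` independent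
of the identically distributed `Zᵢ`, gives
`E[∑_{i<N} ξᵢ |Zᵢ|] = E[∑_{i<N} ξᵢ] ζ = ζ`. The first variable is dominated by the second by the
triangle inequality and both have the same finite mean, so they agree almost surely.
-/

open MeasureTheory ProbabilityTheory Finset
open scoped ENNReal

/- For nonnegative weights, `1{i < n} aᵢ` is a function of the `aⱼ` and of the total `∑_{j<n} aⱼ`
alone. This is what makes `1{i < N} ξᵢ` a.e.-measurable, although `N` itself need not be. -/
theorem ite_lt_eq_min_max_sum_range_sub {a : ℕ → ℝ} (ha : ∀ j, 0 ≤ a j) (n i : ℕ) :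
    (if i < n then a i else 0) =
      min (a i) (max (∑ j ∈ range n, a j - ∑ j ∈ range i, a j) 0) := by
  split_ifs with hin
  · have : a i ≤ ∑ j ∈ range n, a j - ∑ j ∈ range i, a j := by
      rw [← sum_range_add_sum_Ico a hin.le, add_sub_cancel_left]
      exact single_le_sum (fun j _ => ha j) (mem_Ico.2 ⟨le_rfl, hin⟩)
    exact (min_eq_left (this.trans (le_max_left _ _))).symm
  · have : ∑ j ∈ range n, a j ≤ ∑ j ∈ range i, a j :=
      sum_le_sum_of_subset_of_nonneg (range_mono (not_lt.1 hin)) fun j _ _ => ha j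
    rw [max_eq_right (sub_nonpos.2 this), min_eq_right (ha i)]

theorem sum_range_ofReal_mul_eq_tsum (a : ℕ → ℝ) (b : ℕ → ℝ≥0∞) (n : ℕ) :
    ∑ i ∈ range n, ENNReal.ofReal (a i) * b i =
      ∑' i, ENNReal.ofReal (if i < n then a i else 0) * b i := by
  rw [tsum_eq_sum (s := range n) fun i hi => by rw [if_neg (mt mem_range.2 hi)]; simp]
  exact sum_congr rfl fun i hi => by rw [if_pos (mem_range.1 hi)]

section RandomSum

variable {Ω E : Type*} [MeasurableSpace Ω] [MeasurableSpace E] {P : Measure Ω}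
  {N : Ω → ℕ} {ξ : ℕ → Ω → ℝ}

theorem aemeasurable_ite_lt (hξ0 : ∀ i ω, 0 ≤ ξ i ω) (hξ : ∀ i, AEMeasurable (ξ i) P)
    (hW : AEMeasurable (fun ω => ∑ i ∈ range (N ω), ξ i ω) P) (i : ℕ) :
    AEMeasurable (fun ω => if i < N ω then ξ i ω else 0) P := by
  simp_rw [fun ω => ite_lt_eq_min_max_sum_range_sub (hξ0 · ω) (N ω) i]
  have hsum : AEMeasurable (fun ω => ∑ j ∈ range i, ξ j ω) P :=
    Finset.aemeasurable_fun_sum _ fun j _ => hξ j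
  exact (hξ i).min ((hW.sub hsum).max aemeasurable_const)

theorem aemeasurable_sum_range_ofReal_mul (hξ0 : ∀ i ω, 0 ≤ ξ i ω)
    (hξ : ∀ i, AEMeasurable (ξ i) P) (hW : AEMeasurable (fun ω => ∑ i ∈ range (N ω), ξ i ω) P)
    {g : ℕ → Ω → ℝ≥0∞} (hg : ∀ i, AEMeasurable (g i) P) :
    AEMeasurable (fun ω => ∑ i ∈ range (N ω), ENNReal.ofReal (ξ i ω) * g i ω) P := by
  simp_rw [sum_range_ofReal_mul_eq_tsum]
  exact AEMeasurable.tsum fun i =>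
    (aemeasurable_ite_lt hξ0 hξ hW i).ennreal_ofReal.mul (hg i)

theorem lintegral_sum_range_ofReal_mul_eq_of_indepFun (hξ0 : ∀ i ω, 0 ≤ ξ i ω)
    (hξ : ∀ i, AEMeasurable (ξ i) P) (hW : AEMeasurable (fun ω => ∑ i ∈ range (N ω), ξ i ω) P)
    {V : ℕ → Ω → E} (hindep : IndepFun (fun ω => (N ω, fun i => ξ i ω)) (fun ω i => V i ω) P)
    (hident : ∀ i, IdentDistrib (V i) (V 0) P P) {f : E → ℝ≥0∞} (hf : Measurable f) :
    ∫⁻ ω, ∑ i ∈ range (N ω), ENNReal.ofReal (ξ i ω) * f (V i ω) ∂P =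
      (∫⁻ ω, ENNReal.ofReal (∑ i ∈ range (N ω), ξ i ω) ∂P) * ∫⁻ ω, f (V 0 ω) ∂P := by
  set η : ℕ → Ω → ℝ≥0∞ := fun i ω => ENNReal.ofReal (if i < N ω then ξ i ω else 0)
  have hη : ∀ i, AEMeasurable (η i) P := fun i =>
    (aemeasurable_ite_lt hξ0 hξ hW i).ennreal_ofReal
  have hfV : ∀ i, AEMeasurable (fun ω => f (V i ω)) P := fun i =>
    hf.comp_aemeasurable (hident i).aemeasurable_fst
  have hindep_i : ∀ i, IndepFun (η i) (fun ω => f (V i ω)) P := by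
    intro i
    have hφ : Measurable fun p : ℕ × (ℕ → ℝ) => ENNReal.ofReal (if i < p.1 then p.2 i else 0) :=
      (Measurable.ite (measurable_fst measurableSet_Ioi)
        ((measurable_pi_apply i).comp measurable_snd) measurable_const).ennreal_ofReal
    exact hindep.comp hφ (hf.comp (measurable_pi_apply i))
  have hmass : ∀ ω, ∑' i, η i ω = ENNReal.ofReal (∑ i ∈ range (N ω), ξ i ω) := fun ω => by
    have := sum_range_ofReal_mul_eq_tsum (ξ · ω) 1 (N ω)
    simp only [Pi.one_apply, mul_one] at this
    rw [← this, ENNReal.ofReal_sum_of_nonneg fun i _ => hξ0 i ω]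
  calc ∫⁻ ω, ∑ i ∈ range (N ω), ENNReal.ofReal (ξ i ω) * f (V i ω) ∂P
      = ∑' i, ∫⁻ ω, η i ω * f (V i ω) ∂P := by
        simp_rw [sum_range_ofReal_mul_eq_tsum]
        exact lintegral_tsum fun i => (hη i).mul (hfV i)
    _ = ∑' i, (∫⁻ ω, η i ω ∂P) * ∫⁻ ω, f (V 0 ω) ∂P := by
        refine tsum_congr fun i => ?_
        rw [lintegral_mul_eq_lintegral_mul_lintegral_of_indepFun'' (hη i) (hfV i) (hindep_i i)]
        exact congrArg _ ((hident i).comp hf).lintegral_eq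
    _ = (∫⁻ ω, ENNReal.ofReal (∑ i ∈ range (N ω), ξ i ω) ∂P) * ∫⁻ ω, f (V 0 ω) ∂P := by
        rw [ENNReal.tsum_mul_right, ← lintegral_tsum hη]
        simp_rw [hmass]

theorem ae_abs_sum_range_mul_eq_sum_range_mul_abs (hξ0 : ∀ i ω, 0 ≤ ξ i ω)
    (hξ : ∀ i, AEMeasurable (ξ i) P) (hW : Integrable (fun ω => ∑ i ∈ range (N ω), ξ i ω) P)
    (hW1 : ∫ ω, ∑ i ∈ range (N ω), ξ i ω ∂P = 1) {Z : ℕ → Ω → ℝ}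
    (hindep : IndepFun (fun ω => (N ω, fun i => ξ i ω)) (fun ω i => Z i ω) P)
    (hident : ∀ i, IdentDistrib (Z i) (Z 0) P P) (hZ : Integrable (Z 0) P)
    (hfix : ∫⁻ ω, ‖Z 0 ω‖ₑ ∂P ≤ ∫⁻ ω, ‖∑ i ∈ range (N ω), ξ i ω * Z i ω‖ₑ ∂P) :
    ∀ᵐ ω ∂P, |∑ i ∈ range (N ω), ξ i ω * Z i ω| = ∑ i ∈ range (N ω), ξ i ω * |Z i ω| := by
  have hT_eq : ∀ ω, ENNReal.ofReal (∑ i ∈ range (N ω), ξ i ω * |Z i ω|) =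
      ∑ i ∈ range (N ω), ENNReal.ofReal (ξ i ω) * ‖Z i ω‖ₑ := fun ω => by
    rw [ENNReal.ofReal_sum_of_nonneg fun i _ => mul_nonneg (hξ0 i ω) (abs_nonneg _)]
    exact sum_congr rfl fun i _ => by rw [ENNReal.ofReal_mul (hξ0 i ω), Real.enorm_eq_ofReal_abs]
  have hT : ∫⁻ ω, ENNReal.ofReal (∑ i ∈ range (N ω), ξ i ω * |Z i ω|) ∂P = ∫⁻ ω, ‖Z 0 ω‖ₑ ∂P := by
    rw [lintegral_congr hT_eq, lintegral_sum_range_ofReal_mul_eq_of_indepFun hξ0 hξ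
      hW.aemeasurable hindep hident measurable_enorm, ← ofReal_integral_eq_lintegral_ofReal hW
      (ae_of_all _ fun ω => sum_nonneg fun i _ => hξ0 i ω), hW1, ENNReal.ofReal_one, one_mul]
  have hTmeas : AEMeasurable
      (fun ω => ENNReal.ofReal (∑ i ∈ range (N ω), ξ i ω * |Z i ω|)) P := by
    simp_rw [hT_eq]
    exact aemeasurable_sum_range_ofReal_mul hξ0 hξ hW.aemeasurable
      fun i => (hident i).aemeasurable_fst.enorm
  have hle : ∀ ω, |∑ i ∈ range (N ω), ξ i ω * Z i ω| ≤ ∑ i ∈ range (N ω), ξ i ω * |Z i ω| :=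
    fun ω => (abs_sum_le_sum_abs _ _).trans_eq
      (sum_congr rfl fun i _ => by rw [abs_mul, abs_of_nonneg (hξ0 i ω)])
  have hle_ofReal : ∀ ω, ENNReal.ofReal |∑ i ∈ range (N ω), ξ i ω * Z i ω| ≤
      ENNReal.ofReal (∑ i ∈ range (N ω), ξ i ω * |Z i ω|) :=
    fun ω => ENNReal.ofReal_le_ofReal (hle ω)
  have hfin : ∫⁻ ω, ‖Z 0 ω‖ₑ ∂P < ∞ := hZ.2
  simp_rw [Real.enorm_eq_ofReal_abs] at hfix hfin hT
  have hae := ae_eq_of_ae_le_of_lintegral_le (ae_of_all _ hle_ofReal)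
    ((lintegral_mono hle_ofReal).trans_lt (hT ▸ hfin)).ne hTmeas (hT.trans_le hfix)
  filter_upwards [hae] with ω hω
  exact (ENNReal.ofReal_eq_ofReal_iff (abs_nonneg _) ((abs_nonneg _).trans (hle ω))).1 hω

end RandomSum

theorem linear_rde_bivariate_equality_general
    {Ω : Type*} [MeasurableSpace Ω] (P : Measure Ω)
    (N : Ω → ℕ) (ξ : ℕ → Ω → ℝ) (XY : ℕ → Ω → ℝ × ℝ)
    (hξ0 : ∀ i ω, 0 ≤ ξ i ω)
    (hident : ∀ i, IdentDistrib (XY i) (XY 0) P P)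
    (hblock : IndepFun (fun ω => (N ω, fun i => ξ i ω)) (fun ω i => XY i ω) P)
    (hXint : Integrable (fun ω => (XY 0 ω).1) P)
    (hYint : Integrable (fun ω => (XY 0 ω).2) P)
    (hnorm : ∫ ω, ∑ i ∈ Finset.range (N ω), ξ i ω ∂P = 1)
    (hξint : ∀ i, Integrable (ξ i) P)
    (hfix : IdentDistrib
      (fun ω => (∑ i ∈ Finset.range (N ω), ξ i ω * (XY i ω).1,
                 ∑ i ∈ Finset.range (N ω), ξ i ω * (XY i ω).2))
      (XY 0) P P) :
    ∀ᵐ ω ∂P,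
      |∑ i ∈ Finset.range (N ω), ξ i ω * ((XY i ω).1 - (XY i ω).2)| =
        ∑ i ∈ Finset.range (N ω), ξ i ω * |(XY i ω).1 - (XY i ω).2| := by
  have hW : Integrable (fun ω => ∑ i ∈ range (N ω), ξ i ω) P := by
    by_contra h
    rw [integral_undef h] at hnorm
    exact zero_ne_one hnorm
  have hsub : Measurable fun p : ℝ × ℝ => p.1 - p.2 := by fun_prop
  have hS : ∫⁻ ω, ‖(XY 0 ω).1 - (XY 0 ω).2‖ₑ ∂P =
      ∫⁻ ω, ‖∑ i ∈ range (N ω), ξ i ω * ((XY i ω).1 - (XY i ω).2)‖ₑ ∂P := by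
    simp_rw [mul_sub, sum_sub_distrib]
    exact (hfix.comp hsub.enorm).lintegral_eq.symm
  exact ae_abs_sum_range_mul_eq_sum_range_mul_abs hξ0 (fun i => (hξint i).aemeasurable) hW hnorm
    (hblock.comp measurable_id (measurable_pi_lambda _ fun i => hsub.comp (measurable_pi_apply i)))
    (fun i => (hident i).comp hsub) (hXint.sub hYint) hS.le

/-- Suppose `(ξ_i, 1 ≤ i ≤ N)` are nonnegative (with random
`N < ∞`, normalized so that `∑_i E[ξ_i] = 1`), and `(X, Y)` is a pair of integrable
nonnegative random variables with equal means such that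
`(X, Y) =_d (∑_i ξ_i X_i, ∑_i ξ_i Y_i)`, where `((X_i, Y_i))` are i.i.d. copies of
`(X, Y)` independent of `(ξ, N)`.  Then
`|∑_i ξ_i (X_i - Y_i)| = ∑_i ξ_i |X_i - Y_i|` almost surely. -/
theorem linear_rde_bivariate_equality
    {Ω : Type*} [MeasurableSpace Ω] (P : Measure Ω) [IsProbabilityMeasure P]
    (N : Ω → ℕ) (ξ : ℕ → Ω → ℝ) (XY : ℕ → Ω → ℝ × ℝ)
    (hξ0 : ∀ i ω, 0 ≤ ξ i ω)
    (hXY0 : ∀ i ω, 0 ≤ (XY i ω).1 ∧ 0 ≤ (XY i ω).2)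
    (hiid : iIndepFun XY P)
    (hident : ∀ i, IdentDistrib (XY i) (XY 0) P P)
    (hblock : IndepFun (fun ω => (N ω, fun i => ξ i ω)) (fun ω i => XY i ω) P)
    (hXint : Integrable (fun ω => (XY 0 ω).1) P)
    (hYint : Integrable (fun ω => (XY 0 ω).2) P)
    (hmeans : ∫ ω, (XY 0 ω).1 ∂P = ∫ ω, (XY 0 ω).2 ∂P)
    (hnorm : ∫ ω, ∑ i ∈ Finset.range (N ω), ξ i ω ∂P = 1)
    (hξint : ∀ i, Integrable (ξ i) P)
    (hfix : IdentDistrib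
      (fun ω => (∑ i ∈ Finset.range (N ω), ξ i ω * (XY i ω).1,
                 ∑ i ∈ Finset.range (N ω), ξ i ω * (XY i ω).2))
      (XY 0) P P) :
    ∀ᵐ ω ∂P,
      |∑ i ∈ Finset.range (N ω), ξ i ω * ((XY i ω).1 - (XY i ω).2)| =
        ∑ i ∈ Finset.range (N ω), ξ i ω * |(XY i ω).1 - (XY i ω).2| :=
  linear_rde_bivariate_equality_general P N ξ XY hξ0 hident hblock hXint hYint hnorm hξint hfix
end
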